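/- arXiv:1805.09545 — 2 statements merged into one kernel-verified Lean document; each statement's English description precedes it below -/
import Mathlib

section
/- Let F : M(Ω) → ℝ ∪ {+∞} be defined by F(μ) = R(∫Φ dμ) + ∫V dμ where R is convex, Fréchet differentiable, and Φ : Ω → F is a map into a Hilbert space with ∫|Φ|d|μ| < ∞. Then a nonnegative measure μ with F(μ) < ∞ is a global minimizer of F over nonnegative measures if and only if the function F'(μ) : u ↦ ⟨R'(∫Φ dμ), Φ(u)⟩ + V(u) is nonnegative on Ω and vanishes μ-almost everywhere. -/
/-!
Write `x₀ = ∫ Φ dμ`, `g = R'(x₀)` and `f = ⟪g, Φ ·⟫ + V` for the first variation at `μ`.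
Along the segment `t ↦ (1 - t) μ + t ν` of measures the energy is `t ↦ R(x₀ + t (∫ Φ dν - x₀))`
plus an affine function of `t`, with right derivative `∫ f dν - ∫ f dμ` at `t = 0`; by convexity
of `R` the same quantity bounds `F(ν) - F(μ)` from below. Hence `μ` is a minimizer iff
`∫ f dμ ≤ ∫ f dν` for every admissible `ν`. Testing `ν = 0` and `ν = 2μ` gives `∫ f dμ = 0`, and
testing Dirac masses gives `f ≥ 0`; a nonnegative function with zero integral vanishes a.e.
-/

open MeasureTheory Topology Filter Set
open scoped RealInnerProductSpace

theorem IsLocalMinOn.hasDerivAt_nonneg_of_Ici {φ : ℝ → ℝ} {φ' a : ℝ}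
    (hmin : IsLocalMinOn φ (Ici a) a) (hφ : HasDerivAt φ φ' a) : 0 ≤ φ' := by
  have hone : (1 : ℝ) ∈ posTangentConeAt (Ici a) a :=
    mem_posTangentConeAt_of_segment_subset (by simp [segment_eq_Icc, Icc_subset_Ici_self])
  simpa using hmin.hasFDerivWithinAt_nonneg hφ.hasFDerivAt.hasFDerivWithinAt hone

section Gradient

variable {H : Type*} [NormedAddCommGroup H] [InnerProductSpace ℝ H] [CompleteSpace H]
  {R : H → ℝ} {g x : H}

theorem HasGradientAt.hasDerivAt_add_smul (h : HasGradientAt R g x) (v : H) :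
    HasDerivAt (fun t : ℝ => R (x + t • v)) ⟪g, v⟫ 0 := by
  have hline : HasDerivAt (fun t : ℝ => x + t • v) v 0 := by
    simpa using ((hasDerivAt_id (0 : ℝ)).smul_const v).const_add x
  simpa [Function.comp_def] using h.hasFDerivAt.comp_hasDerivAt_of_eq 0 hline (by simp)

theorem ConvexOn.add_inner_sub_le_of_hasGradientAt (hR : ConvexOn ℝ univ R)
    (h : HasGradientAt R g x) (y : H) : R x + ⟪g, y - x⟫ ≤ R y := by
  have hconv : ConvexOn ℝ univ (fun t : ℝ => R (x + t • (y - x))) := by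
    simpa [Function.comp_def, AffineMap.lineMap_apply_module', add_comm] using
      hR.comp_affineMap (AffineMap.lineMap x y)
  have hslope := hconv.le_slope_of_hasDerivAt (mem_univ 0) (mem_univ 1) one_pos
    (h.hasDerivAt_add_smul (y - x))
  simp only [slope_def_field, one_smul, zero_smul, add_zero, add_sub_cancel, sub_zero,
    div_one] at hslope
  linarith

end Gradient

section Measure

variable {α : Type*} [MeasurableSpace α] {μ ν : Measure α}

theorem integral_ofReal_smul_add_ofReal_smul_measure {E : Type*} [NormedAddCommGroup E]
    [NormedSpace ℝ E] {f : α → E} (hμ : Integrable f μ) (hν : Integrable f ν) {t : ℝ}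
    (ht₀ : 0 ≤ t) (ht₁ : t ≤ 1) :
    ∫ u, f u ∂(ENNReal.ofReal (1 - t) • μ + ENNReal.ofReal t • ν) =
      ∫ u, f u ∂μ + t • (∫ u, f u ∂ν - ∫ u, f u ∂μ) := by
  rw [integral_add_measure (hμ.smul_measure ENNReal.ofReal_ne_top)
      (hν.smul_measure ENNReal.ofReal_ne_top), integral_smul_measure, integral_smul_measure,
    ENNReal.toReal_ofReal (sub_nonneg.2 ht₁), ENNReal.toReal_ofReal ht₀]
  module

section Energy

variable {H : Type*} [NormedAddCommGroup H] [InnerProductSpace ℝ H]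

noncomputable def energy (R : H → ℝ) (Φ : α → H) (V : α → ℝ) (ν : Measure α) : ℝ :=
  R (∫ u, Φ u ∂ν) + ∫ u, V u ∂ν

/-- The first variation `F'(μ)` of `energy R Φ V` at `μ`, where `g` is the gradient of `R`
at `∫ Φ dμ`. -/
def firstVariation (g : H) (Φ : α → H) (V : α → ℝ) (u : α) : ℝ := ⟪g, Φ u⟫ + V u

variable {R : H → ℝ} {g : H} {Φ : α → H} {V : α → ℝ}

theorem integrable_firstVariation (hΦ : Integrable Φ ν) (hV : Integrable V ν) :
    Integrable (firstVariation g Φ V) ν :=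
  (hΦ.const_inner g).add hV

theorem forall_integral_firstVariation_le_iff [MeasurableSingletonClass α] [IsFiniteMeasure μ]
    (hμΦ : Integrable Φ μ) (hμV : Integrable V μ) :
    (∀ ν : Measure α, IsFiniteMeasure ν → Integrable Φ ν → Integrable V ν →
      ∫ u, firstVariation g Φ V u ∂μ ≤ ∫ u, firstVariation g Φ V u ∂ν) ↔
    (∀ u, 0 ≤ firstVariation g Φ V u) ∧ ∀ᵐ u ∂μ, firstVariation g Φ V u = 0 := by
  set f := firstVariation g Φ V
  have hf : Integrable f μ := integrable_firstVariation hμΦ hμV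
  constructor
  · intro hvar
    have h_zero : ∫ u, f u ∂μ ≤ 0 := by
      simpa using hvar 0 inferInstance integrable_zero_measure integrable_zero_measure
    have h_double : ∫ u, f u ∂μ ≤ ∫ u, f u ∂μ + ∫ u, f u ∂μ := by
      simpa [integral_add_measure hf hf] using
        hvar (μ + μ) inferInstance (hμΦ.add_measure hμΦ) (hμV.add_measure hμV)
    have h_dirac : ∀ u, ∫ v, f v ∂μ ≤ f u := fun u ↦ by
      simpa using hvar (Measure.dirac u) inferInstance
        (integrable_dirac enorm_lt_top) (integrable_dirac enorm_lt_top)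
    have hf_nonneg : ∀ u, 0 ≤ f u := fun u ↦ by linarith [h_dirac u]
    exact ⟨hf_nonneg, (integral_eq_zero_iff_of_nonneg hf_nonneg hf).1 (by linarith)⟩
  · rintro ⟨hf_nonneg, hf_ae⟩ ν _ _ _
    rw [integral_eq_zero_of_ae hf_ae]
    exact integral_nonneg hf_nonneg

variable [CompleteSpace H]

theorem integral_firstVariation (hΦ : Integrable Φ ν) (hV : Integrable V ν) :
    ∫ u, firstVariation g Φ V u ∂ν = ⟪g, ∫ u, Φ u ∂ν⟫ + ∫ u, V u ∂ν := by
  unfold firstVariation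
  rw [integral_add (hΦ.const_inner g) hV, integral_inner hΦ]

theorem energy_add_integral_firstVariation_sub_le (hR : ConvexOn ℝ univ R)
    (hg : HasGradientAt R g (∫ u, Φ u ∂μ)) (hμΦ : Integrable Φ μ) (hμV : Integrable V μ)
    (hνΦ : Integrable Φ ν) (hνV : Integrable V ν) :
    energy R Φ V μ + (∫ u, firstVariation g Φ V u ∂ν - ∫ u, firstVariation g Φ V u ∂μ) ≤
      energy R Φ V ν := by
  have hgrad := hR.add_inner_sub_le_of_hasGradientAt hg (∫ u, Φ u ∂ν)
  rw [inner_sub_right] at hgrad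
  rw [integral_firstVariation hμΦ hμV, integral_firstVariation hνΦ hνV, energy, energy]
  linarith

theorem integral_firstVariation_le_of_forall_energy_le [IsFiniteMeasure μ]
    (hg : HasGradientAt R g (∫ u, Φ u ∂μ)) (hμΦ : Integrable Φ μ) (hμV : Integrable V μ)
    (hmin : ∀ ν : Measure α, IsFiniteMeasure ν → Integrable Φ ν → Integrable V ν →
      energy R Φ V μ ≤ energy R Φ V ν)
    [IsFiniteMeasure ν] (hνΦ : Integrable Φ ν) (hνV : Integrable V ν) :
    ∫ u, firstVariation g Φ V u ∂μ ≤ ∫ u, firstVariation g Φ V u ∂ν := by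
  set x := ∫ u, Φ u ∂μ
  set a := ∫ u, V u ∂μ
  set φ : ℝ → ℝ := fun t => R (x + t • (∫ u, Φ u ∂ν - x)) + (a + t * (∫ u, V u ∂ν - a))
  have hφ : HasDerivAt φ (⟪g, ∫ u, Φ u ∂ν - x⟫ + (∫ u, V u ∂ν - a)) 0 :=
    (hg.hasDerivAt_add_smul _).add ((hasDerivAt_mul_const _).const_add a)
  have hφ_segment : ∀ t ∈ Icc (0 : ℝ) 1,
      φ t = energy R Φ V (ENNReal.ofReal (1 - t) • μ + ENNReal.ofReal t • ν) := fun t ht => by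
    rw [energy, integral_ofReal_smul_add_ofReal_smul_measure hμΦ hνΦ ht.1 ht.2,
      integral_ofReal_smul_add_ofReal_smul_measure hμV hνV ht.1 ht.2, smul_eq_mul]
  have hφ_min : IsLocalMinOn φ (Ici 0) 0 := by
    refine mem_of_superset (Icc_mem_nhdsGE one_pos) fun t ht => ?_
    have := μ.smul_finite (ENNReal.ofReal_ne_top (r := 1 - t))
    have := ν.smul_finite (ENNReal.ofReal_ne_top (r := t))
    have hφ_zero : φ 0 = energy R Φ V μ := by simp [φ, energy, x, a]
    rw [mem_ofPred_eq, hφ_zero, hφ_segment t ht]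
    exact hmin _ inferInstance
      ((hμΦ.smul_measure ENNReal.ofReal_ne_top).add_measure
        (hνΦ.smul_measure ENNReal.ofReal_ne_top))
      ((hμV.smul_measure ENNReal.ofReal_ne_top).add_measure
        (hνV.smul_measure ENNReal.ofReal_ne_top))
  have hderiv := hφ_min.hasDerivAt_nonneg_of_Ici hφ
  rw [inner_sub_right] at hderiv
  rw [integral_firstVariation hμΦ hμV, integral_firstVariation hνΦ hνV]
  linarith

theorem forall_energy_le_iff_forall_integral_firstVariation_le [IsFiniteMeasure μ]
    (hR : ConvexOn ℝ univ R) (hg : HasGradientAt R g (∫ u, Φ u ∂μ))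
    (hμΦ : Integrable Φ μ) (hμV : Integrable V μ) :
    (∀ ν : Measure α, IsFiniteMeasure ν → Integrable Φ ν → Integrable V ν →
      energy R Φ V μ ≤ energy R Φ V ν) ↔
    ∀ ν : Measure α, IsFiniteMeasure ν → Integrable Φ ν → Integrable V ν →
      ∫ u, firstVariation g Φ V u ∂μ ≤ ∫ u, firstVariation g Φ V u ∂ν := by
  refine ⟨fun hmin ν _ hνΦ hνV ↦
    integral_firstVariation_le_of_forall_energy_le hg hμΦ hμV hmin hνΦ hνV, ?_⟩
  intro hvar ν _ hνΦ hνV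
  have := energy_add_integral_firstVariation_sub_le hR hg hμΦ hμV hνΦ hνV
  linarith [hvar ν inferInstance hνΦ hνV]

end Energy

end Measure

theorem global_minimizer_iff_first_order_conditions_general
    {d : ℕ} {H : Type*} [NormedAddCommGroup H] [InnerProductSpace ℝ H]
    [CompleteSpace H]
    (Ω : Set (EuclideanSpace ℝ (Fin d)))
    (R : H → ℝ) (R' : H → H)
    (hRconvex : ConvexOn ℝ Set.univ R)
    (hRdiff : ∀ x, HasGradientAt R (R' x) x)
    (Φ : Ω → H) (V : Ω → ℝ)
    (μ : Measure Ω) [IsFiniteMeasure μ]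
    (hμΦ : Integrable Φ μ) (hμV : Integrable V μ) :
    ((∀ ν : Measure Ω, IsFiniteMeasure ν → Integrable Φ ν → Integrable V ν →
        R (∫ u, Φ u ∂μ) + ∫ u, V u ∂μ ≤ R (∫ u, Φ u ∂ν) + ∫ u, V u ∂ν)
      ↔
      ((∀ u : Ω, 0 ≤ ⟪R' (∫ u, Φ u ∂μ), Φ u⟫ + V u) ∧
        (∀ᵐ u ∂μ, ⟪R' (∫ u, Φ u ∂μ), Φ u⟫ + V u = 0))) :=
  (forall_energy_le_iff_forall_integral_firstVariation_le hRconvex (hRdiff _) hμΦ hμV).trans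
    (forall_integral_firstVariation_le_iff hμΦ hμV)

/-- Global optimality conditions for `F(μ) = R(∫ Φ dμ) + ∫ V dμ` over nonnegative
measures: a finite nonnegative measure `μ` (with everything integrable, i.e.
`F(μ) < ∞`) is a global minimizer of `F` over nonnegative measures if and only
if `F'(μ) : u ↦ ⟨R'(∫Φ dμ), Φ(u)⟩ + V(u)` is nonnegative on `Ω` and vanishes
`μ`-almost everywhere. -/
theorem global_minimizer_iff_first_order_conditions
    {d : ℕ} {H : Type*} [NormedAddCommGroup H] [InnerProductSpace ℝ H]
    [CompleteSpace H] [SecondCountableTopology H]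
    (Ω : Set (EuclideanSpace ℝ (Fin d)))
    (R : H → ℝ) (R' : H → H)
    (hRconvex : ConvexOn ℝ Set.univ R)
    (hRdiff : ∀ x, HasGradientAt R (R' x) x)
    (Φ : Ω → H) (V : Ω → ℝ) (hV : Continuous V) (hΦ : Continuous Φ)
    (μ : Measure Ω) [IsFiniteMeasure μ]
    (hμΦ : Integrable Φ μ) (hμV : Integrable V μ) :
    ((∀ ν : Measure Ω, IsFiniteMeasure ν → Integrable Φ ν → Integrable V ν →
        R (∫ u, Φ u ∂μ) + ∫ u, V u ∂μ ≤ R (∫ u, Φ u ∂ν) + ∫ u, V u ∂ν)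
      ↔
      ((∀ u : Ω, 0 ≤ ⟪R' (∫ u, Φ u ∂μ), Φ u⟫ + V u) ∧
        (∀ᵐ u ∂μ, ⟪R' (∫ u, Φ u ∂μ), Φ u⟫ + V u = 0))) :=
  global_minimizer_iff_first_order_conditions_general Ω R R' hRconvex hRdiff Φ V μ hμΦ hμV
end

section
/- Let X : [0,T] × ℝ^d → ℝ^d be a continuous map with X(0,·) = id, and suppose that for all ε > 0 there exists η > 0 such that u ∈ B(0,η) implies X_t⁻¹({u}) ⊂ B(0,ε) for all t. If K is a closed subset of ℝ^d contained in B(0, r_b) that separates the sphere r_a·S^{d-1} from the sphere r_b·S^{d-1} for some 0 < r_a < r_b, then for all t ∈ [0,T] the set X_t(K) is contained in some ball B(0,r'_b) and separates r'_a·S^{d-1} from r'_b·S^{d-1} for some 0 < r'_a < r'_b. -/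
noncomputable section

variable {d : ℕ}

/-- `K` separates `A` from `B`: every continuous path from a point of `A`
to a point of `B` intersects `K`. -/
def Separates (K A B : Set (EuclideanSpace ℝ (Fin d))) : Prop :=
  ∀ f : ℝ → EuclideanSpace ℝ (Fin d), ContinuousOn f (Set.Icc 0 1) →
    f 0 ∈ A → f 1 ∈ B → ∃ s ∈ Set.Icc (0:ℝ) 1, f s ∈ K

/-!
Degree theory is replaced by a continuation principle. Let `Ω` be the complement of the closure
of the set of points joined to the sphere `r_b S^{d-1}` outside `K`: it is open, contains
`B(0, r_a)`, lies in `B(0, r_b)`, and `∂Ω ⊆ K`. Take `r'_a` below the `η` attached to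
`ε = r_a`, and `r'_b` above `‖X‖` on `[0,T] × B̄(0, r_b)`. A path `γ` from `r'_a S^{d-1}` to
`r'_b S^{d-1}` avoiding `X_t(K)` gives a homotopy (first `s ↦ X_{ts}` against the target `γ 0`,
then `X_t` against the moving target `γ`) along which the image of `∂Ω` never meets the
target. Since `X_0 = id` attains `γ 0 ∈ Ω`, `X_t` attains `γ 1` on `closure Ω`, contradicting
the choice of `r'_b`.

The continuation principle reduces, through an Urysohn function, to the fact that a map which is
the identity on `∂Ω` attains every point of `Ω`, i.e. to Brouwer's no-retraction theorem. That
theorem is proved following Milnor: if `r` is a `C¹` retraction of `ℝ^d` onto the unit sphere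
and `B` is the closed unit ball, `t ↦ ∫_B det D(x + t (r x - x))` is a polynomial, equal to
`vol B` for small `t` because then `x ↦ x + t (r x - x)` maps `B` bijectively onto itself, but
vanishing at `t = 1` because `‖r‖ = 1`. A continuous retraction is smoothed with a partition
of unity.
-/

open Set Metric Function Filter Topology MeasureTheory
open scoped NNReal RealInnerProductSpace Manifold ContDiff

section DetPolynomial

open Polynomial

variable {n R : Type*} [Fintype n] [DecidableEq n]

theorem Matrix.det_one_add_smul_eq_eval [CommRing R] (M : Matrix n n R) (t : R) :
    (1 + t • M).det = (1 + (X : R[X]) • M.map C).det.eval t := by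
  rw [← coe_evalRingHom, RingHom.map_det]
  congr 1
  ext i j
  simp [mul_comm t, Matrix.one_apply, apply_ite]

theorem Matrix.natDegree_det_one_add_X_smul_le [CommRing R] (M : Matrix n n R) :
    (1 + (X : R[X]) • M.map C).det.natDegree ≤ Fintype.card n := by
  refine natDegree_le_iff_coeff_eq_zero.2 fun k hk => ?_
  rw [coeff_det_one_add_X_smul_eq_sum_minors, Finset.powersetCard_eq_empty.2, Finset.sum_empty]
  simpa using hk

theorem Matrix.continuous_coeff_det_one_add_X_smul (k : ℕ) :
    Continuous fun M : Matrix n n ℝ => (1 + (X : ℝ[X]) • M.map C).det.coeff k := by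
  simp only [coeff_det_one_add_X_smul_eq_sum_minors]
  fun_prop

theorem ContinuousOn.exists_polynomial_setIntegral_det_one_add_smul {α E : Type*}
    [TopologicalSpace α] [T2Space α] [MeasurableSpace α] [OpensMeasurableSpace α]
    [NormedAddCommGroup E] [NormedSpace ℝ E] [FiniteDimensional ℝ E] {μ : Measure α}
    [IsFiniteMeasureOnCompacts μ] {s : Set α} {N : α → E →L[ℝ] E} (hN : ContinuousOn N s)
    (hs : IsCompact s) : ∃ P : ℝ[X], ∀ t : ℝ, ∫ x in s, (1 + t • N x).det ∂μ = P.eval t := by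
  classical
  let b := Module.finBasis ℝ E
  let m : α → Matrix _ _ ℝ := fun x => LinearMap.toMatrix b b (N x)
  let Q : α → ℝ[X] := fun x => (1 + (X : ℝ[X]) • (m x).map C).det
  have hm : ContinuousOn m s :=
    (((LinearMap.toMatrix b b).toLinearMap.comp
      (ContinuousLinearMap.coeLM ℝ)).continuous_of_finiteDimensional).comp_continuousOn hN
  have hQ : ∀ k, IntegrableOn (fun x => (Q x).coeff k) s μ := fun k =>
    ((Matrix.continuous_coeff_det_one_add_X_smul k).comp_continuousOn hm).integrableOn_compact hs
  refine ⟨∑ k ∈ Finset.range (Module.finrank ℝ E + 1),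
    C (∫ x in s, (Q x).coeff k ∂μ) * X ^ k, fun t => ?_⟩
  have hexpand : ∀ x, (1 + t • N x).det =
      ∑ k ∈ Finset.range (Module.finrank ℝ E + 1), (Q x).coeff k * t ^ k := by
    intro x
    rw [ContinuousLinearMap.det, ← LinearMap.det_toMatrix b]
    simp only [ContinuousLinearMap.toLinearMap_add, ContinuousLinearMap.toLinearMap_one,
      ContinuousLinearMap.toLinearMap_smul, map_add, map_smul, LinearMap.toMatrix_one]
    rw [Matrix.det_one_add_smul_eq_eval, eval_eq_sum_range' (n := Module.finrank ℝ E + 1)]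
    exact Nat.lt_succ_of_le ((Matrix.natDegree_det_one_add_X_smul_le _).trans_eq (by simp))
  simp only [hexpand, eval_finsetSum, eval_mul, eval_C, eval_pow, eval_X]
  rw [integral_finsetSum _ fun k _ => (hQ k).mul_const _]
  simp only [integral_mul_const]

end DetPolynomial

theorem Function.Bijective.image_eq_self {α : Type*} {φ : α → α} {s : Set α} (hφ : Bijective φ)
    (h : ∀ x ∉ s, φ x = x) : φ '' s = s := by
  refine Subset.antisymm ?_ fun y hy => ?_
  · rintro _ ⟨x, hx, rfl⟩
    by_contra hφx
    rw [hφ.1 (h _ hφx)] at hφx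
    exact hφx hx
  · obtain ⟨x, rfl⟩ := hφ.2 y
    by_cases hx : x ∈ s
    · exact ⟨x, hx, rfl⟩
    · exact absurd (h x hx ▸ hy) hx

theorem LipschitzWith.bijective_id_add {E : Type*} [NormedAddCommGroup E] [CompleteSpace E]
    {g : E → E} {K : ℝ≥0} (hK : K < 1) (hg : LipschitzWith K g) :
    Bijective fun x => x + g x := by
  have hc : ∀ y, ContractingWith K fun x => y - g x := fun y =>
    ⟨hK, by simpa using (LipschitzWith.const y).sub hg⟩
  have hfix : ∀ x y, IsFixedPt (fun x => y - g x) x ↔ x + g x = y := fun x y => by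
    rw [IsFixedPt, eq_comm, eq_sub_iff_add_eq]
  exact ⟨fun x x' h => (hc _).fixedPoint_unique' ((hfix x _).2 rfl) ((hfix x' _).2 h.symm),
    fun y => ⟨_, (hfix _ y).1 (hc y).fixedPoint_isFixedPt⟩⟩

section NormedSpace

variable {E : Type*} [NormedAddCommGroup E] [NormedSpace ℝ E]

theorem exists_norm_eq_dist_le {x z : E} {ρ : ℝ} (hx : ‖x‖ ≤ ρ) (hz : ρ ≤ ‖z‖) :
    ∃ w, ‖w‖ = ρ ∧ dist x w ≤ dist x z := by
  obtain ⟨w, hw, hwρ⟩ := (convex_segment x z).isPreconnected.intermediate_value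
    (left_mem_segment ℝ x z) (right_mem_segment ℝ x z) continuous_norm.continuousOn ⟨hx, hz⟩
  exact ⟨w, hwρ, (dist_add_dist_of_mem_segment hw).symm ▸ le_add_of_nonneg_right dist_nonneg⟩

theorem le_norm_of_mem_segment_smul_norm {z p : E} {ρ : ℝ} (hz : ρ ≤ ‖z‖)
    (hp : p ∈ segment ℝ z ((ρ / ‖z‖) • z)) : ρ ≤ ‖p‖ := by
  rcases le_or_gt ρ 0 with hρ | hρ
  · exact hρ.trans (norm_nonneg p)
  have hz0 : 0 < ‖z‖ := hρ.trans_le hz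
  have hzw : dist z ((ρ / ‖z‖) • z) = ‖z‖ - ρ := by
    rw [dist_eq_norm, show z - (ρ / ‖z‖) • z = (1 - ρ / ‖z‖) • z by rw [sub_smul, one_smul],
      norm_smul, Real.norm_of_nonneg (by rw [sub_nonneg, div_le_one hz0]; exact hz), sub_mul,
      div_mul_cancel₀ _ hz0.ne', one_mul]
  have hzp : dist z p ≤ ‖z‖ - ρ := hzw ▸ (dist_add_dist_of_mem_segment hp).symm ▸
    le_add_of_nonneg_right dist_nonneg
  linarith [norm_sub_norm_le z p, dist_eq_norm z p]

theorem LipschitzOnWith.lipschitzWith_extend_zero {F : Type*} [NormedAddCommGroup F] {g : E → F}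
    {K : ℝ≥0} {ρ : ℝ} (hg : LipschitzOnWith K g (closedBall 0 ρ))
    (h0 : ∀ x, ‖x‖ = ρ → g x = 0) : LipschitzWith K fun x => if ‖x‖ ≤ ρ then g x else 0 := by
  have hmixed : ∀ x z : E, ‖x‖ ≤ ρ → ¬ ‖z‖ ≤ ρ → dist (g x) 0 ≤ K * dist x z := by
    intro x z hx hz
    obtain ⟨w, hwρ, hw⟩ := exists_norm_eq_dist_le hx (not_le.1 hz).le
    calc dist (g x) 0 = dist (g x) (g w) := by rw [h0 w hwρ]
      _ ≤ K * dist x w := hg.dist_le_mul x (by simpa using hx) w (by simp [hwρ])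
      _ ≤ K * dist x z := by gcongr
  refine LipschitzWith.of_dist_le_mul fun x z => ?_
  by_cases hx : ‖x‖ ≤ ρ <;> by_cases hz : ‖z‖ ≤ ρ <;> simp only [hx, hz, if_true, if_false]
  · exact hg.dist_le_mul x (by simpa using hx) z (by simpa using hz)
  · exact hmixed x z hx hz
  · rw [dist_comm, dist_comm x]
    exact hmixed z x hz hx
  · simp only [dist_self]
    positivity

theorem ContinuousLinearMap.det_one_add_pos_of_norm_lt_one [CompleteSpace E] {A : E →L[ℝ] E}
    (hA : ‖A‖ < 1) : 0 < (1 + A).det := by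
  have hne : ∀ s ∈ Icc (0 : ℝ) 1, (1 + s • A).det ≠ 0 := by
    intro s hs
    have hsA : ‖-(s • A)‖ < 1 := by
      rw [norm_neg, norm_smul, Real.norm_of_nonneg hs.1]
      nlinarith [norm_nonneg A, hs.2]
    simpa [ContinuousLinearMap.det] using (((Units.oneSub _ hsA).isUnit.map
      ContinuousLinearMap.toLinearMapRingHom).map LinearMap.det).ne_zero
  have hcont : ContinuousOn (fun s : ℝ => (1 + s • A).det) (Icc 0 1) :=
    (ContinuousLinearMap.continuous_det.comp (by fun_prop)).continuousOn
  by_contra! hle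
  obtain ⟨s, hs, hs0⟩ := intermediate_value_Icc' zero_le_one hcont
    ⟨by simpa using hle, by simp [ContinuousLinearMap.det]⟩
  exact hne s hs hs0

variable [FiniteDimensional ℝ E]

theorem setIntegral_det_one_add_smul_eq_measureReal [MeasurableSpace E] [BorelSpace E]
    (μ : Measure E) [μ.IsAddHaarMeasure] {g : E → E} {N : E → E →L[ℝ] E} {C : ℝ≥0} {ρ : ℝ}
    (hg : ∀ x ∈ closedBall 0 ρ, HasFDerivWithinAt g (N x) (closedBall 0 ρ) x)
    (hN : ∀ x ∈ closedBall 0 ρ, ‖N x‖₊ ≤ C) (h0 : ∀ x, ‖x‖ = ρ → g x = 0) {t : ℝ}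
    (ht : 0 ≤ t) (htC : t * C < 1) :
    ∫ x in closedBall 0 ρ, (1 + t • N x).det ∂μ = μ.real (closedBall 0 ρ) := by
  have hφ : Bijective fun x => x + t • (if ‖x‖ ≤ ρ then g x else 0) := by
    refine LipschitzWith.bijective_id_add (K := ‖t‖₊ * C) ?_ ((lipschitzWith_smul t).comp
      (((convex_closedBall 0 ρ).lipschitzOnWith_of_nnnorm_hasFDerivWithin_le hg hN
        ).lipschitzWith_extend_zero h0))
    rw [← NNReal.coe_lt_coe]
    simpa [abs_of_nonneg ht] using htC
  have heq : EqOn (fun x => x + t • g x) (fun x => x + t • (if ‖x‖ ≤ ρ then g x else 0))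
      (closedBall 0 ρ) := fun x hx => by simp [mem_closedBall_zero_iff.1 hx]
  have himage : (fun x => x + t • g x) '' closedBall 0 ρ = closedBall 0 ρ := by
    rw [heq.image_eq]
    exact hφ.image_eq_self fun x hx => by simp [mt mem_closedBall_zero_iff.2 hx]
  have hderiv : ∀ x ∈ closedBall 0 ρ,
      HasFDerivWithinAt (fun x => x + t • g x) (1 + t • N x) (closedBall 0 ρ) x :=
    fun x hx => (hasFDerivWithinAt_id x _).add ((hg x hx).const_smul t)
  have hpos : ∀ x ∈ closedBall 0 ρ, 0 < (1 + t • N x).det := fun x hx =>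
    ContinuousLinearMap.det_one_add_pos_of_norm_lt_one <| by
      rw [norm_smul, Real.norm_of_nonneg ht]
      exact (mul_le_mul_of_nonneg_left (NNReal.coe_le_coe.2 (hN x hx)) ht).trans_lt htC
  have hcov := integral_image_eq_integral_abs_det_fderiv_smul μ measurableSet_closedBall hderiv
    (hφ.1.injOn.congr heq.symm) (fun _ => (1 : ℝ))
  rw [himage, setIntegral_const, smul_eq_mul, mul_one] at hcov
  rw [hcov]
  exact setIntegral_congr_fun measurableSet_closedBall fun x hx => by
    simp [abs_of_pos (hpos x hx)]

theorem exists_contDiff_forall_mem_convex_of_local {F : Type*} [NormedAddCommGroup F]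
    [NormedSpace ℝ F] {n : ℕ∞} {t : E → Set F} (ht : ∀ x, Convex ℝ (t x))
    (Hloc : ∀ x, ∃ U ∈ 𝓝 x, ∃ g : E → F, ContDiffOn ℝ n g U ∧ ∀ y ∈ U, g y ∈ t y) :
    ∃ g : E → F, ContDiff ℝ n g ∧ ∀ x, g x ∈ t x := by
  obtain ⟨g, hg⟩ := exists_contMDiffMap_forall_mem_convex_of_local 𝓘(ℝ, E) ht fun x => by
    obtain ⟨U, hU, g, hgU, hgt⟩ := Hloc x
    exact ⟨U, hU, g, contMDiffOn_iff_contDiffOn.2 hgU, hgt⟩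
  exact ⟨g, contMDiff_iff_contDiff.1 g.contMDiff, hg⟩

end NormedSpace

section InnerProductSpace

variable {E : Type*} [NormedAddCommGroup E] [InnerProductSpace ℝ E] [FiniteDimensional ℝ E]

theorem HasFDerivAt.det_eq_zero_of_norm_eq_one {r : E → E} {A : E →L[ℝ] E} {x : E}
    (hr : HasFDerivAt r A x) (h1 : ∀ᶠ y in 𝓝 x, ‖r y‖ = 1) : A.det = 0 := by
  have hconst : HasFDerivAt (fun y => ‖r y‖ ^ 2) (0 : E →L[ℝ] ℝ) x :=
    (hasFDerivAt_const (1 : ℝ) x).congr_of_eventuallyEq (h1.mono fun y hy => by simp [hy])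
  have horth : ∀ v, ⟪r x, A v⟫ = 0 := fun v => by
    simpa using congr($(hr.norm_sq.unique hconst) v)
  by_contra hdet
  obtain ⟨v, hv⟩ := ((Module.End.isUnit_iff _).1
    ((LinearMap.isUnit_iff_isUnit_det _).2 (isUnit_iff_ne_zero.2 hdet))).2 (r x)
  have := horth v
  rw [show A v = r x from hv, real_inner_self_eq_norm_sq, h1.self_of_nhds] at this
  norm_num at this

theorem not_contDiff_of_norm_eq_one_of_eqOn_sphere {r : E → E} (hsph : ∀ x, ‖r x‖ = 1)
    (hid : EqOn r id (sphere 0 1)) : ¬ ContDiff ℝ 1 r := by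
  intro hr
  borelize E
  let μ : Measure E := Measure.addHaar
  let N : E → E →L[ℝ] E := fun x => fderiv ℝ r x - 1
  have hN : ∀ x, HasFDerivAt (fun x => r x - x) (N x) x := fun x =>
    ((hr.differentiable one_ne_zero x).hasFDerivAt).sub (hasFDerivAt_id x)
  have hNc : Continuous N := (hr.continuous_fderiv one_ne_zero).sub continuous_const
  obtain ⟨C₀, hC₀⟩ := (isCompact_closedBall (0 : E) 1).exists_bound_of_continuousOn
    hNc.continuousOn
  set C : ℝ≥0 := C₀.toNNReal
  have hC : ∀ x ∈ closedBall (0 : E) 1, ‖N x‖₊ ≤ C := fun x hx => by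
    rw [← NNReal.coe_le_coe, coe_nnnorm]
    exact (hC₀ x hx).trans (Real.le_coe_toNNReal C₀)
  obtain ⟨P, hP⟩ := hNc.continuousOn.exists_polynomial_setIntegral_det_one_add_smul (μ := μ)
    (isCompact_closedBall (0 : E) 1)
  have hsmall : ∀ t ∈ Icc (0 : ℝ) (1 / (C + 1)), P.eval t = μ.real (closedBall 0 1) := by
    intro t ht
    rw [← hP t]
    refine setIntegral_det_one_add_smul_eq_measureReal μ (fun x _ => (hN x).hasFDerivWithinAt)
      hC (fun x hx => by simp [hid (mem_sphere_zero_iff_norm.2 hx)]) ht.1 ?_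
    have := ht.2
    rw [le_div_iff₀ (by positivity)] at this
    nlinarith [ht.1, C.2]
  have hPconst : P = Polynomial.C (μ.real (closedBall 0 1)) :=
    Polynomial.eq_of_infinite_eval_eq _ _ <|
      (Icc_infinite (a := (0 : ℝ)) (b := 1 / (C + 1)) (by positivity)).mono fun t ht => by
        simpa using hsmall t ht
  have hzero : P.eval 1 = 0 := by
    rw [← hP 1]
    refine (setIntegral_congr_fun measurableSet_closedBall fun x _ => ?_).trans (integral_zero _ _)
    simpa [N] using ((hr.differentiable one_ne_zero x).hasFDerivAt).det_eq_zero_of_norm_eq_one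
      (Eventually.of_forall hsph)
  rw [hPconst, Polynomial.eval_C] at hzero
  exact (ENNReal.toReal_pos (measure_closedBall_pos μ 0 one_pos).ne'
    measure_closedBall_lt_top.ne).ne' hzero

theorem exists_contDiff_eqOn_sphere_dist_lt {F : E → E} (hF : Continuous F)
    (hid : EqOn F id (sphere 0 1)) {n : ℕ∞} {ε : ℝ} (hε : 0 < ε) :
    ∃ G : E → E, ContDiff ℝ n G ∧ EqOn G id (sphere 0 1) ∧ ∀ x, dist (G x) (F x) < ε := by
  classical
  -- near the sphere the radial projection is a local smooth choice
  obtain ⟨G, hG, hGt⟩ := exists_contDiff_forall_mem_convex_of_local (n := n)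
    (t := fun y => if ‖y‖ = 1 then {y} else ball (F y) ε)
    (fun y => by split_ifs; exacts [convex_singleton y, convex_ball _ _]) fun x => by
    by_cases hx : ‖x‖ = 1
    · have hx0 : x ≠ 0 := by rintro rfl; simp at hx
      have hcont : ContinuousAt (fun y => dist (‖y‖⁻¹ • y) (F y)) x :=
        ((continuous_norm.continuousAt.inv₀ (norm_ne_zero_iff.2 hx0)).smul
          continuousAt_id).dist hF.continuousAt
      refine ⟨{y | y ≠ 0 ∧ dist (‖y‖⁻¹ • y) (F y) < ε},
        inter_mem (isOpen_ne.mem_nhds hx0) (hcont.eventually (gt_mem_nhds ?_)),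
        fun y => ‖y‖⁻¹ • y, fun y hy => ?_, fun y hy => ?_⟩
      · simpa [hx, hid (mem_sphere_zero_iff_norm.2 hx)] using hε
      · exact ((contDiffAt_norm ℝ hy.1).inv (norm_ne_zero_iff.2 hy.1)).smul
          contDiffAt_id |>.contDiffWithinAt
      · by_cases hy1 : ‖y‖ = 1
        · simp [hy1]
        · simpa [hy1, dist_comm] using hy.2
    · have hU : {y | ‖y‖ ≠ 1 ∧ dist (F y) (F x) < ε} ∈ 𝓝 x :=
        inter_mem ((isOpen_ne_fun continuous_norm continuous_const).mem_nhds hx)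
          (hF.continuousAt.eventually (ball_mem_nhds (F x) hε))
      exact ⟨_, hU, fun _ => F x, contDiffOn_const, fun y hy => by
        simpa [hy.1, dist_comm] using hy.2⟩
  refine ⟨G, hG, fun x hx => ?_, fun x => ?_⟩
  · simpa [mem_sphere_zero_iff_norm.1 hx] using hGt x
  · by_cases hx : ‖x‖ = 1
    · have hGx : G x = x := by simpa [hx] using hGt x
      simpa [hGx, hid (mem_sphere_zero_iff_norm.2 hx)] using hε
    · simpa [hx] using hGt x

theorem not_continuous_of_norm_eq_one_of_eqOn_sphere {r : E → E} (hsph : ∀ x, ‖r x‖ = 1)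
    (hid : EqOn r id (sphere 0 1)) : ¬ Continuous r := by
  intro hr
  obtain ⟨G, hG, hGid, hGr⟩ := exists_contDiff_eqOn_sphere_dist_lt hr hid (n := 1) one_pos
  have hG0 : ∀ x, G x ≠ 0 := fun x hx => by simpa [hx, hsph] using hGr x
  refine not_contDiff_of_norm_eq_one_of_eqOn_sphere (r := fun x => ‖G x‖⁻¹ • G x)
    (fun x => by simp [norm_smul, hG0 x])
    (fun x hx => by simp [hGid hx, mem_sphere_zero_iff_norm.1 hx]) ?_
  exact contDiff_iff_contDiffAt.2 fun x =>
    ((hG.contDiffAt.norm ℝ (hG0 x)).inv (norm_ne_zero_iff.2 (hG0 x))).smul hG.contDiffAt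

theorem Continuous.exists_eq_of_eqOn_sphere {g : E → E} (hg : Continuous g) {y : E} {ρ : ℝ}
    (hρ : 0 < ρ) (hid : EqOn g id (sphere y ρ)) : ∃ x, g x = y := by
  by_contra! hne
  let w : E → E := fun u => g (y + ρ • u) - y
  have hw0 : ∀ u, w u ≠ 0 := fun u => sub_ne_zero.2 (hne _)
  refine not_continuous_of_norm_eq_one_of_eqOn_sphere (r := fun u => ‖w u‖⁻¹ • w u)
    (fun u => by simp [norm_smul, hw0 u]) (fun u hu => ?_) ?_
  · have hu1 : ‖u‖ = 1 := mem_sphere_zero_iff_norm.1 hu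
    have : w u = ρ • u := by
      simp [w, hid (show y + ρ • u ∈ sphere y ρ by simp [norm_smul, hu1, abs_of_pos hρ])]
    simp [this, norm_smul, hu1, abs_of_pos hρ, smul_smul, hρ.ne']
  · have hwc : Continuous w := by fun_prop
    exact (hwc.norm.inv₀ fun u => norm_ne_zero_iff.2 (hw0 u)).smul hwc

theorem ContinuousOn.exists_eq_of_eqOn_frontier {Ω : Set E} (hΩ : Bornology.IsBounded Ω)
    {g : E → E} (hg : ContinuousOn g (closure Ω)) (hid : EqOn g id (frontier Ω)) {y : E}
    (hy : y ∈ Ω) : ∃ x ∈ closure Ω, g x = y := by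
  classical
  obtain ⟨ρ, hρ⟩ := (isBounded_iff_subset_ball y).1 hΩ.closure
  have hg' : Continuous ((closure Ω).piecewise g id) :=
    continuous_piecewise (fun x hx => hid (frontier_closure_subset hx))
      (by rwa [closure_closure]) continuousOn_id
  have hout : ∀ x ∉ closure Ω, (closure Ω).piecewise g id x = x :=
    fun x hx => piecewise_eq_of_notMem _ _ _ hx
  obtain ⟨x, hx⟩ := hg'.exists_eq_of_eqOn_sphere (pos_of_mem_ball (hρ (subset_closure hy)))
    fun z hz => hout z fun hzΩ => (hρ hzΩ).ne (mem_sphere.1 hz)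
  by_cases hxΩ : x ∈ closure Ω
  · exact ⟨x, hxΩ, by rwa [piecewise_eq_of_mem _ _ _ hxΩ] at hx⟩
  · exact absurd (hout x hxΩ ▸ hx ▸ subset_closure hy) hxΩ

theorem exists_eq_of_homotopy {Ω : Set E} (hΩ : Bornology.IsBounded Ω) {H : ℝ → E → E}
    (hH : ContinuousOn (uncurry H) (Icc 0 1 ×ˢ closure Ω)) (hH0 : EqOn (H 0) id (frontier Ω))
    {y : E} (hy : y ∈ Ω) (hfr : ∀ θ ∈ Icc (0 : ℝ) 1, ∀ x ∈ frontier Ω, H θ x ≠ y) :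
    ∃ x ∈ closure Ω, H 1 x = y := by
  have hS : IsCompact (Icc (0 : ℝ) 1 ×ˢ closure Ω) := isCompact_Icc.prod hΩ.isCompact_closure
  set A : Set E := Prod.snd '' (Icc 0 1 ×ˢ closure Ω ∩ uncurry H ⁻¹' {y})
  have hA : IsCompact A := (hS.of_isClosed_subset
    (hH.preimage_isClosed_of_isClosed hS.isClosed isClosed_singleton) inter_subset_left).image
    continuous_snd
  have hdisj : Disjoint (frontier Ω) A := by
    rw [disjoint_left]
    rintro x hx ⟨⟨θ, x⟩, ⟨⟨hθ, -⟩, hHx⟩, rfl⟩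
    exact hfr θ hθ x hx hHx
  obtain ⟨u, hu0, hu1, hu01⟩ := exists_continuous_zero_one_of_isClosed isClosed_frontier
    hA.isClosed hdisj
  -- `x ↦ H (u x) x` is the identity on `∂Ω`, and it can only hit `y` where `u = 1`
  have hg : ContinuousOn (fun x => H (u x) x) (closure Ω) :=
    hH.comp (u.continuous.prodMk continuous_id).continuousOn fun x hx => ⟨hu01 x, hx⟩
  obtain ⟨x, hx, hgx⟩ := hg.exists_eq_of_eqOn_frontier hΩ
    (fun x hx => by simpa [hu0 hx] using hH0 hx) hy
  have hxA : x ∈ A := ⟨(u x, x), ⟨⟨hu01 x, hx⟩, hgx⟩, rfl⟩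
  exact ⟨x, hx, by simpa [hu1 hxA] using hgx⟩

theorem exists_eq_of_homotopy_of_path {Ω : Set E} (hΩ : Bornology.IsBounded Ω)
    {H : ℝ → E → E} (hH : ContinuousOn (uncurry H) (Icc 0 1 ×ˢ closure Ω))
    (hH0 : EqOn (H 0) id (frontier Ω)) {γ : ℝ → E} (hγ : ContinuousOn γ (Icc 0 1))
    (hγ0 : γ 0 ∈ Ω) (hHfr : ∀ s ∈ Icc (0 : ℝ) 1, ∀ x ∈ frontier Ω, H s x ≠ γ 0)
    (hγfr : ∀ s ∈ Icc (0 : ℝ) 1, ∀ x ∈ frontier Ω, H 1 x ≠ γ s) :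
    ∃ x ∈ closure Ω, H 1 x = γ 1 := by
  have hmin : MapsTo (fun θ : ℝ => min (2 * θ) 1) (Icc 0 1) (Icc 0 1) :=
    fun θ hθ => ⟨le_min (by linarith [hθ.1]) zero_le_one, min_le_right _ _⟩
  have hmax : MapsTo (fun θ : ℝ => max (2 * θ - 1) 0) (Icc 0 1) (Icc 0 1) :=
    fun θ hθ => ⟨le_max_right _ _, max_le (by linarith [hθ.2]) zero_le_one⟩
  obtain ⟨x, hx, hHx⟩ := exists_eq_of_homotopy (y := γ 0) hΩ
    (H := fun θ x => H (min (2 * θ) 1) x - γ (max (2 * θ - 1) 0) + γ 0)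
    (((hH.comp ((continuous_const.mul continuous_fst).min continuous_const |>.prodMk
      continuous_snd).continuousOn fun p hp => ⟨hmin hp.1, hp.2⟩).sub
      (hγ.comp (by fun_prop) fun p hp => hmax hp.1)).add continuousOn_const)
    (fun x hx => by simpa using hH0 hx) hγ0 fun θ hθ x hx => by
      rw [Ne, add_eq_right, sub_eq_zero]
      rcases le_total θ (1 / 2) with hθ2 | hθ2
      · rw [max_eq_right (by linarith)]
        exact hHfr _ (hmin hθ) x hx
      · rw [min_eq_right (by linarith)]
        exact hγfr _ (hmax hθ) x hx
  refine ⟨x, hx, ?_⟩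
  norm_num [sub_eq_zero] at hHx
  exact hHx

end InnerProductSpace

section Separation

local notation "𝔼" => EuclideanSpace ℝ (Fin d)

theorem Separates.closedBall_left {K : Set 𝔼} {ra rb : ℝ}
    (hK : Separates K (sphere 0 ra) (sphere 0 rb)) (hrab : ra ≤ rb) :
    Separates K (closedBall 0 ra) (sphere 0 rb) := by
  intro f hf hf0 hf1
  obtain ⟨s₀, hs₀, hfs₀⟩ := intermediate_value_Icc zero_le_one hf.norm
    ⟨mem_closedBall_zero_iff.1 hf0, (mem_sphere_zero_iff_norm.1 hf1).symm ▸ hrab⟩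
  have hmaps : MapsTo (fun u : ℝ => s₀ + u * (1 - s₀)) (Icc 0 1) (Icc 0 1) := fun u hu =>
    ⟨by nlinarith [hs₀.1, hs₀.2, hu.1], by nlinarith [hs₀.1, hs₀.2, hu.2]⟩
  obtain ⟨u, hu, hfu⟩ := hK (fun u => f (s₀ + u * (1 - s₀))) (hf.comp (by fun_prop) hmaps)
    (by simpa using hfs₀) (by simpa using hf1)
  exact ⟨_, hmaps hu, hfu⟩

theorem Separates.exists_isOpen_frontier_subset {K : Set 𝔼} {ra rb : ℝ} (hK : IsClosed K)
    (hKb : K ⊆ ball 0 rb) (hsep : Separates K (sphere 0 ra) (sphere 0 rb)) (hra : 0 < ra)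
    (hrab : ra ≤ rb) : ∃ Ω, IsOpen Ω ∧ ball 0 ra ⊆ Ω ∧ Ω ⊆ ball 0 rb ∧ frontier Ω ⊆ K := by
  set V := ⋃ w ∈ sphere (0 : 𝔼) rb, pathComponentIn Kᶜ w
  have hVo : IsOpen V := isOpen_biUnion fun w _ => hK.isOpen_compl.pathComponentIn w
  have hVout : ∀ z, rb ≤ ‖z‖ → z ∈ V := by
    intro z hz
    have hz0 : 0 < ‖z‖ := (hra.trans_le hrab).trans_le hz
    have hw : (rb / ‖z‖) • z ∈ sphere 0 rb := by
      simp [norm_smul, abs_of_pos (hra.trans_le hrab), hz0.ne']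
    have hseg : segment ℝ z ((rb / ‖z‖) • z) ⊆ Kᶜ := fun p hp hpK =>
      (le_norm_of_mem_segment_smul_norm hz hp).not_gt (mem_ball_zero_iff.1 (hKb hpK))
    exact mem_biUnion hw (((convex_segment _ _).isPathConnected ⟨z, left_mem_segment ℝ _ _⟩
      |>.joinedIn _ (left_mem_segment ℝ _ _) _ (right_mem_segment ℝ _ _)).mono hseg).symm
  have hVin : Disjoint V (closedBall 0 ra) := by
    simp only [V, disjoint_left, mem_iUnion]
    rintro z ⟨w, hw, hwz⟩ hz
    obtain ⟨s, hs, hsK⟩ := hsep.closedBall_left hrab hwz.symm.somePath.extend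
      hwz.symm.somePath.continuous_extend.continuousOn (by simpa using hz) (by simpa using hw)
    exact hwz.symm.somePath_mem ⟨s, hs⟩ (by rwa [Path.extend_apply _ hs] at hsK)
  have hVfr : frontier V ⊆ K := by
    intro x hx
    by_contra hxK
    obtain ⟨z, hzx, hzV⟩ := mem_closure_iff.1 hx.1 _ (hK.isOpen_compl.pathComponentIn x)
      (mem_pathComponentIn_self hxK)
    simp only [V, mem_iUnion] at hzV
    obtain ⟨w, hw, hwz⟩ := hzV
    exact hx.2 (hVo.interior_eq.symm ▸ mem_biUnion hw (hwz.trans hzx.symm))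
  refine ⟨(closure V)ᶜ, isClosed_closure.isOpen_compl, fun z hz hzV => ?_, fun z hz => ?_, ?_⟩
  · obtain ⟨z', hz', hz'V⟩ := mem_closure_iff.1 hzV _ isOpen_ball hz
    exact disjoint_left.1 hVin hz'V (ball_subset_closedBall hz')
  · by_contra hzb
    exact hz (subset_closure (hVout z (by simpa using hzb)))
  · rw [frontier_compl]
    exact frontier_closure_subset.trans hVfr

theorem separates_image_of_homotopy {Ω K : Set 𝔼} (hΩ : Bornology.IsBounded Ω)
    (hfr : frontier Ω ⊆ K) {H : ℝ → 𝔼 → 𝔼} (hH : ContinuousOn (uncurry H) (Icc 0 1 ×ˢ closure Ω))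
    (hH0 : EqOn (H 0) id (frontier Ω)) {ra' rb' : ℝ} (hra' : sphere 0 ra' ⊆ Ω)
    (hHfr : ∀ s ∈ Icc (0 : ℝ) 1, ∀ x ∈ frontier Ω, ‖H s x‖ ≠ ra')
    (hrb' : ∀ x ∈ closure Ω, ‖H 1 x‖ < rb') :
    Separates (H 1 '' K) (sphere 0 ra') (sphere 0 rb') := by
  intro γ hγ hγ0 hγ1
  by_contra! hγK
  obtain ⟨x, hx, hx1⟩ := exists_eq_of_homotopy_of_path hΩ hH hH0 hγ (hra' hγ0)
    (fun s hs x hx h => hHfr s hs x hx (h ▸ mem_sphere_zero_iff_norm.1 hγ0))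
    (fun s hs x hx h => hγK s hs ⟨x, hfr hx, h⟩)
  exact (hrb' x hx).ne (hx1 ▸ mem_sphere_zero_iff_norm.1 hγ1)

end Separation

theorem set_separation_spheres_general
    (T : ℝ)
    (X : ℝ → EuclideanSpace ℝ (Fin d) → EuclideanSpace ℝ (Fin d))
    (hXcont : Continuous fun p : ℝ × EuclideanSpace ℝ (Fin d) => X p.1 p.2)
    (hX0 : X 0 = id)
    (hXinv : ∀ ε > (0:ℝ), ∃ η > (0:ℝ), ∀ t ∈ Set.Icc 0 T, ∀ u₀,
      ‖X t u₀‖ < η → ‖u₀‖ < ε)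
    (ra rb : ℝ) (hra : 0 < ra) (hrab : ra < rb)
    (K : Set (EuclideanSpace ℝ (Fin d))) (hKclosed : IsClosed K)
    (hKball : K ⊆ Metric.ball (0 : EuclideanSpace ℝ (Fin d)) rb)
    (hKsep : Separates K (Metric.sphere (0 : EuclideanSpace ℝ (Fin d)) ra)
      (Metric.sphere (0 : EuclideanSpace ℝ (Fin d)) rb)) :
    ∀ t ∈ Set.Icc 0 T, ∃ ra' rb' : ℝ, 0 < ra' ∧ ra' < rb' ∧
      X t '' K ⊆ Metric.ball (0 : EuclideanSpace ℝ (Fin d)) rb' ∧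
      Separates (X t '' K)
        (Metric.sphere (0 : EuclideanSpace ℝ (Fin d)) ra')
        (Metric.sphere (0 : EuclideanSpace ℝ (Fin d)) rb') := by
  intro t ht
  obtain ⟨η, hη, hXη⟩ := hXinv ra hra
  obtain ⟨M, hM⟩ := (isCompact_Icc.prod (isCompact_closedBall 0 rb)).exists_bound_of_continuousOn
    hXcont.continuousOn
  obtain ⟨Ω, hΩo, hraΩ, hΩrb, hfr⟩ :=
    hKsep.exists_isOpen_frontier_subset hKclosed hKball hra hrab.le
  have hfr_norm : ∀ x ∈ frontier Ω, ra ≤ ‖x‖ := fun x hx => not_lt.1 fun h =>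
    hΩo.inter_frontier_eq.subset ⟨hraΩ (mem_ball_zero_iff.2 h), hx⟩
  have hts : ∀ s ∈ Icc (0 : ℝ) 1, t * s ∈ Icc 0 T := fun s hs =>
    ⟨mul_nonneg ht.1 hs.1, (mul_le_of_le_one_right ht.1 hs.2).trans ht.2⟩
  have hXM : ∀ x ∈ closedBall 0 rb, ‖X t x‖ ≤ M := fun x hx => hM (t, x) ⟨ht, hx⟩
  refine ⟨min η ra / 2, max M ra + 1, by positivity,
    by linarith [min_le_right η ra, le_max_right M ra], ?_, ?_⟩
  · rintro _ ⟨x, hx, rfl⟩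
    rw [mem_ball_zero_iff]
    linarith [hXM x (ball_subset_closedBall (hKball hx)), le_max_left M ra]
  · simpa using separates_image_of_homotopy (H := fun s => X (t * s)) (K := K)
      (isBounded_ball.subset hΩrb) hfr
      (hXcont.comp (f := fun p : ℝ × _ => (t * p.1, p.2)) (by fun_prop)).continuousOn
      (fun x _ => by simp [hX0])
      (fun z hz => hraΩ (by simp_all; linarith [min_le_right η ra]))
      (fun s hs x hx hXx => (hfr_norm x hx).not_gt
        (hXη _ (hts s hs) x (by rw [hXx]; linarith [min_le_left η ra])))
      (fun x hx => by
        simpa using (hXM x ((closure_mono hΩrb).trans closure_ball_subset_closedBall hx)).trans_lt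
          (by linarith [le_max_left M ra] : M < max M ra + 1))

/-- Set separation by spheres is preserved by a continuous deformation
`X : [0,T] × ℝ^d → ℝ^d` with `X₀ = id` and preimages of small balls around the
origin small: if the closed set `K ⊆ B(0, r_b)` separates `r_a S^{d-1}` from
`r_b S^{d-1}`, then each `X_t(K)` is contained in some ball `B(0, r'_b)` and
separates `r'_a S^{d-1}` from `r'_b S^{d-1}` for some `0 < r'_a < r'_b`. -/
theorem set_separation_spheres
    (T : ℝ) (hT : 0 ≤ T)
    (X : ℝ → EuclideanSpace ℝ (Fin d) → EuclideanSpace ℝ (Fin d))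
    (hXcont : Continuous fun p : ℝ × EuclideanSpace ℝ (Fin d) => X p.1 p.2)
    (hX0 : X 0 = id)
    (hXinv : ∀ ε > (0:ℝ), ∃ η > (0:ℝ), ∀ t ∈ Set.Icc 0 T, ∀ u₀,
      ‖X t u₀‖ < η → ‖u₀‖ < ε)
    (ra rb : ℝ) (hra : 0 < ra) (hrab : ra < rb)
    (K : Set (EuclideanSpace ℝ (Fin d))) (hKclosed : IsClosed K)
    (hKball : K ⊆ Metric.ball (0 : EuclideanSpace ℝ (Fin d)) rb)
    (hKsep : Separates K (Metric.sphere (0 : EuclideanSpace ℝ (Fin d)) ra)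
      (Metric.sphere (0 : EuclideanSpace ℝ (Fin d)) rb)) :
    ∀ t ∈ Set.Icc 0 T, ∃ ra' rb' : ℝ, 0 < ra' ∧ ra' < rb' ∧
      X t '' K ⊆ Metric.ball (0 : EuclideanSpace ℝ (Fin d)) rb' ∧
      Separates (X t '' K)
        (Metric.sphere (0 : EuclideanSpace ℝ (Fin d)) ra')
        (Metric.sphere (0 : EuclideanSpace ℝ (Fin d)) rb') :=
  set_separation_spheres_general T X hXcont hX0 hXinv ra rb hra hrab K hKclosed hKball hKsep

end
end
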